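/- arXiv:1205.0260 — 2 statements merged into one kernel-verified Lean document; each statement's English description precedes it below -/
import Mathlib

section
/- Let n ≥ 2 be an integer, ε_j = e^{2πij/n}, and let s ≥ 0 and d ≥ 0 be integers. Then ∑_{j=1}^{n−1} |∑_{h=0}^{s−1} (h+1)^d ε_j^h| ≤ 2^{d+1} s^d n log n. -/
/-!
Summation by parts against the monotone weights `(h + 1) ^ d` reduces the inner sum to partial
geometric sums `∑_{h<k} ε_j ^ h`, each of norm at most `2 / ‖1 - ε_j‖`; this gives the factor
`2 (2 s ^ d - 1) ≤ 2 ^ (d + 1) s ^ d`. Since `‖1 - ε_j‖ = 2 sin (π j / n)`, Jordan's inequality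
gives `1 / ‖1 - ε_j‖ ≤ (n / 4) (1 / j + 1 / (n - j))`, and `∑_{0<j<n} 1 / j ≤ 2 log n`.
-/

open Finset Real

theorem norm_sum_range_succ_smul_le_of_monotone {E : Type*} [SeminormedAddCommGroup E]
    [NormedSpace ℝ E] {a : ℕ → ℝ} (ha : Monotone a) (ha0 : 0 ≤ a 0) {z : ℕ → E} {B : ℝ}
    (hB : ∀ k, ‖∑ i ∈ range k, z i‖ ≤ B) (s : ℕ) :
    ‖∑ i ∈ range (s + 1), a i • z i‖ ≤ (2 * a s - a 0) * B := by
  have hincr : ∀ i, 0 ≤ a (i + 1) - a i := fun i => sub_nonneg.2 (ha i.le_succ)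
  rw [sum_range_by_parts, Nat.add_sub_cancel]
  calc _ ≤ ‖a s • ∑ i ∈ range (s + 1), z i‖
          + ∑ i ∈ range s, ‖(a (i + 1) - a i) • ∑ j ∈ range (i + 1), z j‖ :=
        (norm_sub_le _ _).trans (by gcongr; exact norm_sum_le _ _)
    _ ≤ a s * B + ∑ i ∈ range s, (a (i + 1) - a i) * B := by
        have has : 0 ≤ a s := ha0.trans (ha s.zero_le)
        rw [norm_smul, Real.norm_of_nonneg has]
        gcongr with i
        · exact hB _
        · rw [norm_smul, Real.norm_of_nonneg (hincr i)]
          exact mul_le_mul_of_nonneg_left (hB _) (hincr i)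
    _ = (2 * a s - a 0) * B := by
        rw [← sum_mul, sum_range_sub a]; ring

theorem norm_geom_sum_le_two_div {𝕜 : Type*} [NormedDivisionRing 𝕜] {ε : 𝕜} (hε : ‖ε‖ ≤ 1)
    (hε1 : ε ≠ 1) (k : ℕ) : ‖∑ i ∈ range k, ε ^ i‖ ≤ 2 / ‖1 - ε‖ := by
  rw [geom_sum_eq hε1, norm_div, norm_sub_rev ε 1]
  gcongr
  calc ‖ε ^ k - 1‖ ≤ ‖ε‖ ^ k + ‖(1 : 𝕜)‖ := (norm_sub_le _ _).trans_eq (by rw [norm_pow])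
    _ ≤ 2 := by rw [norm_one]; linarith [pow_le_one₀ (norm_nonneg ε) hε (n := k)]

theorem norm_sum_range_add_one_pow_mul_pow_le {𝕜 : Type*} [RCLike 𝕜] {ε : 𝕜} (hε : ‖ε‖ ≤ 1)
    (hε1 : ε ≠ 1) (s d : ℕ) :
    ‖∑ h ∈ range s, ((h : 𝕜) + 1) ^ d * ε ^ h‖ ≤ 2 ^ (d + 1) * (s : ℝ) ^ d / ‖1 - ε‖ := by
  obtain _ | s := s
  · simp only [range_zero, sum_empty, norm_zero]; positivity
  have habel := norm_sum_range_succ_smul_le_of_monotone (a := fun h : ℕ => ((h : ℝ) + 1) ^ d)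
    (fun i j hij => by dsimp only; gcongr) (by positivity) (norm_geom_sum_le_two_div hε hε1) s
  have hweights : ∀ h : ℕ, (((h : ℝ) + 1) ^ d) • ε ^ h = ((h : 𝕜) + 1) ^ d * ε ^ h := fun h => by
    rw [RCLike.real_smul_eq_coe_mul]; push_cast; rfl
  simp only [hweights, Nat.cast_zero, zero_add, one_pow] at habel
  refine habel.trans ?_
  rw [mul_div_assoc', div_le_div_iff_of_pos_right (norm_pos_iff.2 (sub_ne_zero.2 hε1.symm))]
  have hS : 1 ≤ ((s : ℝ) + 1) ^ d := one_le_pow₀ (by linarith [s.cast_nonneg (α := ℝ)])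
  push_cast
  obtain _ | d := d
  · norm_num
  · have h4 : (4 : ℝ) ≤ 2 ^ (d + 1 + 1) := by
      calc (4 : ℝ) = 2 ^ 2 := by norm_num
        _ ≤ 2 ^ (d + 1 + 1) := pow_le_pow_right₀ (by norm_num) (by omega)
    nlinarith

theorem exp_two_pi_I_mul_div_eq_exp_I_mul (j n : ℕ) :
    Complex.exp (2 * π * Complex.I * j / n) = Complex.exp (Complex.I * ↑(2 * π * j / n)) := by
  push_cast; ring_nf

theorem norm_exp_two_pi_I_mul_div (j n : ℕ) : ‖Complex.exp (2 * π * Complex.I * j / n)‖ = 1 := by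
  rw [exp_two_pi_I_mul_div_eq_exp_I_mul, Complex.norm_exp_I_mul_ofReal]

theorem norm_one_sub_exp_two_pi_I_mul_div (j n : ℕ) :
    ‖1 - Complex.exp (2 * π * Complex.I * j / n)‖ = 2 * |sin (π * j / n)| := by
  rw [norm_sub_rev, exp_two_pi_I_mul_div_eq_exp_I_mul, Complex.norm_exp_I_mul_ofReal_sub_one,
    norm_mul, Real.norm_two, Real.norm_eq_abs]
  ring_nf

theorem sin_pi_mul_div_pos {j n : ℕ} (hj : 0 < j) (hjn : j < n) : 0 < sin (π * j / n) := by
  have hj' : (0 : ℝ) < j := by exact_mod_cast hj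
  have hjn' : (j : ℝ) < n := by exact_mod_cast hjn
  have hn : (0 : ℝ) < n := hj'.trans hjn'
  apply sin_pos_of_pos_of_lt_pi (by positivity)
  rw [div_lt_iff₀ hn]
  nlinarith [pi_pos]

theorem exp_two_pi_I_mul_div_ne_one {j n : ℕ} (hj : 0 < j) (hjn : j < n) :
    Complex.exp (2 * π * Complex.I * j / n) ≠ 1 := by
  intro h
  have := norm_one_sub_exp_two_pi_I_mul_div j n
  rw [h, sub_self, norm_zero] at this
  linarith [abs_pos_of_pos (sin_pi_mul_div_pos hj hjn)]

/-- Jordan's inequality on both halves of `(0, π)`. -/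
theorem one_div_sin_le {x : ℝ} (hx : 0 < x) (hxπ : x < π) :
    1 / sin x ≤ π / 2 * (1 / x + 1 / (π - x)) := by
  have hmin : 2 / π * min x (π - x) ≤ sin x := by
    rcases le_total x (π / 2) with h | h
    · exact (mul_le_mul_of_nonneg_left (min_le_left _ _) (by positivity)).trans
        (mul_le_sin hx.le h)
    · rw [← sin_pi_sub]
      exact (mul_le_mul_of_nonneg_left (min_le_right _ _) (by positivity)).trans
        (mul_le_sin (by linarith) (by linarith))
  have hminpos : 0 < min x (π - x) := lt_min hx (by linarith)
  calc 1 / sin x ≤ 1 / (2 / π * min x (π - x)) := one_div_le_one_div_of_le (by positivity) hmin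
    _ = π / 2 * (1 / min x (π - x)) := by field_simp
    _ ≤ π / 2 * (1 / x + 1 / (π - x)) := by
        gcongr
        rcases min_choice x (π - x) with h | h <;> rw [h]
        · linarith [one_div_pos.2 (sub_pos.2 hxπ)]
        · linarith [one_div_pos.2 hx]

theorem one_div_norm_one_sub_exp_two_pi_I_mul_div_le {j n : ℕ} (hj : 0 < j) (hjn : j < n) :
    1 / ‖1 - Complex.exp (2 * π * Complex.I * j / n)‖ ≤ n / 4 * (1 / j + 1 / ((n : ℝ) - j)) := by
  have hj' : (0 : ℝ) < j := by exact_mod_cast hj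
  have hjn' : (j : ℝ) < n := by exact_mod_cast hjn
  have hn : (0 : ℝ) < n := hj'.trans hjn'
  have hsin := one_div_sin_le (x := π * j / n) (by positivity) (by
    rw [div_lt_iff₀ hn]; nlinarith [pi_pos])
  rw [norm_one_sub_exp_two_pi_I_mul_div, abs_of_pos (sin_pi_mul_div_pos hj hjn)]
  calc 1 / (2 * sin (π * j / n)) = 1 / 2 * (1 / sin (π * j / n)) := by field_simp
    _ ≤ 1 / 2 * (π / 2 * (1 / (π * j / n) + 1 / (π - π * j / n))) := by gcongr
    _ = n / 4 * (1 / j + 1 / ((n : ℝ) - j)) := by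
        have : (n : ℝ) - j ≠ 0 := by linarith
        field_simp
        ring

theorem sum_Ico_one_div_sub_eq (n : ℕ) :
    ∑ j ∈ Ico 1 n, 1 / ((n : ℝ) - j) = ∑ j ∈ Ico 1 n, 1 / (j : ℝ) := by
  refine sum_nbij' (fun j => n - j) (fun j => n - j) ?_ ?_ ?_ ?_ ?_ <;>
    intro j hj <;> simp only [mem_Ico] at hj ⊢ <;> first | omega | rw [Nat.cast_sub hj.2.le]

theorem sum_Ico_one_div_le_two_mul_log (n : ℕ) : ∑ j ∈ Ico 1 n, 1 / (j : ℝ) ≤ 2 * log n := by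
  induction n with
  | zero => simp
  | succ n ih =>
    obtain _ | n := n
    · simp
    rw [sum_Ico_succ_top (by omega)]
    have hlog : 1 / ((n : ℝ) + 1) ≤ 2 * (log ((n + 1 + 1 : ℕ)) - log ((n + 1 : ℕ))) := by
      rw [← log_div (by positivity) (by positivity), ← div_le_iff₀' two_pos]
      refine le_trans ?_ (one_sub_inv_le_log_of_pos (by positivity))
      push_cast
      rw [inv_div, div_le_iff₀ (by positivity)]
      field_simp
      nlinarith
    push_cast at ih hlog ⊢
    linarith

theorem sum_one_div_norm_one_sub_exp_two_pi_I_mul_div_le (n : ℕ) :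
    ∑ j ∈ Ico 1 n, 1 / ‖1 - Complex.exp (2 * π * Complex.I * j / n)‖ ≤ n * log n := by
  calc _ ≤ ∑ j ∈ Ico 1 n, (n : ℝ) / 4 * (1 / j + 1 / ((n : ℝ) - j)) := by
        refine sum_le_sum fun j hj => ?_
        rw [mem_Ico] at hj
        exact one_div_norm_one_sub_exp_two_pi_I_mul_div_le hj.1 hj.2
    _ = n / 2 * ∑ j ∈ Ico 1 n, 1 / (j : ℝ) := by
        rw [← mul_sum, sum_add_distrib, sum_Ico_one_div_sub_eq]; ring
    _ ≤ n / 2 * (2 * log n) := by gcongr; exact sum_Ico_one_div_le_two_mul_log n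
    _ = n * log n := by ring

theorem weighted_root_of_unity_sum_bound_general (n : ℕ) (s d : ℕ) :
    ∑ j ∈ Finset.Ico 1 n,
      ‖∑ h ∈ Finset.range s,
        ((h : ℂ) + 1) ^ d * Complex.exp (2 * Real.pi * Complex.I * j / n) ^ h‖
      ≤ 2 ^ (d + 1) * (s : ℝ) ^ d * n * Real.log n := by
  calc _ ≤ ∑ j ∈ Ico 1 n,
        2 ^ (d + 1) * (s : ℝ) ^ d / ‖1 - Complex.exp (2 * π * Complex.I * j / n)‖ := by
        refine sum_le_sum fun j hj => ?_
        rw [mem_Ico] at hj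
        exact norm_sum_range_add_one_pow_mul_pow_le (norm_exp_two_pi_I_mul_div j n).le
          (exp_two_pi_I_mul_div_ne_one hj.1 hj.2) s d
    _ = 2 ^ (d + 1) * (s : ℝ) ^ d *
        ∑ j ∈ Ico 1 n, 1 / ‖1 - Complex.exp (2 * π * Complex.I * j / n)‖ := by
        simp only [mul_sum, mul_one_div]
    _ ≤ 2 ^ (d + 1) * (s : ℝ) ^ d * (n * log n) := by
        gcongr; exact sum_one_div_norm_one_sub_exp_two_pi_I_mul_div_le n
    _ = 2 ^ (d + 1) * (s : ℝ) ^ d * n * Real.log n := by ring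

theorem weighted_root_of_unity_sum_bound (n : ℕ) (hn : 2 ≤ n) (s d : ℕ) :
    ∑ j ∈ Finset.Ico 1 n,
      ‖∑ h ∈ Finset.range s,
        ((h : ℂ) + 1) ^ d * Complex.exp (2 * Real.pi * Complex.I * j / n) ^ h‖
      ≤ 2 ^ (d + 1) * (s : ℝ) ^ d * n * Real.log n :=
  weighted_root_of_unity_sum_bound_general n s d
end

section
/- Let g be a Littlewood polynomial of degree t−1 whose coefficients are periodic with period p (i.e. g_j = g_k whenever j ≡ k mod p). If t/p > 3/2, then ||g||₄⁴/||g||₂⁴ ≥ 1 + 2(1 − p/t)² > 11/9. -/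
/-!
The Fourier coefficients of `θ ↦ |g(e^{iθ})|²` are the aperiodic autocorrelations
`C_n = ∑_{j - k = n} a_j conj(a_k)` of the coefficients `a_j` of `g`, so Parseval's identity
gives `‖g‖₄⁴ = ∑_n |C_n|²`. For a `p`-periodic Littlewood polynomial every product
`a_j conj(a_k)` with `j ≡ k (mod p)` equals `1`, hence `C_0 = t` and `C_{±p} = t - p`; keeping
only these three frequencies yields `‖g‖₄⁴ ≥ t² + 2 (t - p)²`.
-/

open Complex Finset Polynomial MeasureTheory ComplexConjugate
open scoped Real

lemma integral_exp_int_mul_mul_I (n : ℤ) :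
    ∫ θ in (0 : ℝ)..2 * π, exp (n * θ * I) = if n = 0 then (2 * π : ℂ) else 0 := by
  split_ifs with hn
  · simp [hn]
  · have hc : (n : ℂ) * I ≠ 0 := by simp [hn]
    simp_rw [show ∀ θ : ℝ, (n : ℂ) * θ * I = n * I * θ from fun θ => by ring]
    rw [integral_exp_mul_complex hc,
      show (n : ℂ) * I * ↑(2 * π) = n * (2 * π * I) by push_cast; ring,
      exp_int_mul_two_pi_mul_I]
    simp

lemma fourierCoeffOn_two_pi (f : ℝ → ℂ) (n : ℤ) :
    fourierCoeffOn Real.two_pi_pos f n =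
      (2 * π : ℂ)⁻¹ * ∫ θ in (0 : ℝ)..2 * π, exp (-n * θ * I) * f θ := by
  rw [fourierCoeffOn_eq_integral, sub_zero, one_div, real_smul, ofReal_inv, ofReal_mul,
    ofReal_ofNat]
  congr 2
  funext θ
  rw [fourier_coe_apply, smul_eq_mul]
  congr 2
  field_simp
  push_cast
  ring

lemma sum_range_sum_range_ite_sub_eq (t d : ℕ) (b : ℕ → ℕ → ℂ)
    (hb : ∀ k, k + d < t → b (k + d) k = 1) :
    ∑ j ∈ range t, ∑ k ∈ range t, (if (j : ℤ) - k = d then b j k else 0) =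
      (t - d : ℕ) := by
  have hshift (j k : ℕ) : (j : ℤ) - k = d ↔ j = k + d := by omega
  simp only [hshift]
  rw [sum_comm]
  simp only [sum_ite_eq', mem_range]
  rw [sum_congr rfl fun k _ => ite_congr rfl (hb k) fun _ => rfl, sum_boole,
    show {k ∈ range t | k + d < t} = range (t - d) by ext; simp; omega, card_range]

namespace Polynomial

def autocorrelation (g : ℂ[X]) (N : ℕ) (n : ℤ) : ℂ :=
  ∑ j ∈ range N, ∑ k ∈ range N,
    if (j : ℤ) - k = n then g.coeff j * conj (g.coeff k) else 0

lemma autocorrelation_neg (g : ℂ[X]) (N : ℕ) (n : ℤ) :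
    g.autocorrelation N (-n) = conj (g.autocorrelation N n) := by
  rw [autocorrelation, autocorrelation, sum_comm, map_sum]
  refine sum_congr rfl fun k _ => ?_
  rw [map_sum]
  refine sum_congr rfl fun j _ => ?_
  have : (j : ℤ) - k = -n ↔ (k : ℤ) - j = n := by omega
  simp only [this, apply_ite conj, map_mul, conj_conj, map_zero, mul_comm]

lemma sq_norm_eval_exp_mul_I {g : ℂ[X]} {N : ℕ} (hN : g.natDegree < N) (θ : ℝ) :
    ((‖g.eval (exp (θ * I))‖ ^ 2 : ℝ) : ℂ) = ∑ j ∈ range N, ∑ k ∈ range N,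
      g.coeff j * conj (g.coeff k) * exp (((j : ℤ) - k : ℤ) * θ * I) := by
  rw [ofReal_pow, ← mul_conj', eval_eq_sum_range' hN, map_sum, sum_mul_sum]
  refine sum_congr rfl fun j _ => sum_congr rfl fun k _ => ?_
  rw [map_mul, map_pow, ← exp_conj, ← exp_nat_mul, ← exp_nat_mul]
  have : (((j : ℤ) - k : ℤ) : ℂ) * θ * I = j * (θ * I) + k * conj (θ * I) := by
    simp [conj_ofReal]; ring
  rw [this, exp_add]
  ring

lemma fourierCoeffOn_sq_norm_eval_exp_mul_I {g : ℂ[X]} {N : ℕ} (hN : g.natDegree < N)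
    (n : ℤ) :
    fourierCoeffOn Real.two_pi_pos (fun θ => ((‖g.eval (exp (θ * I))‖ ^ 2 : ℝ) : ℂ)) n =
      g.autocorrelation N n := by
  have hshift (c : ℂ) (m : ℤ) (θ : ℝ) :
      exp (-n * θ * I) * (c * exp (m * θ * I)) = c * exp ((m - n : ℤ) * θ * I) := by
    rw [mul_left_comm, ← exp_add]; push_cast; ring_nf
  simp_rw [fourierCoeffOn_two_pi, sq_norm_eval_exp_mul_I hN, mul_sum, hshift]
  rw [intervalIntegral.integral_finsetSum fun j _ =>
    (by fun_prop : Continuous _).intervalIntegrable _ _, mul_sum]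
  refine sum_congr rfl fun j _ => ?_
  rw [intervalIntegral.integral_finsetSum fun k _ =>
    (by fun_prop : Continuous _).intervalIntegrable _ _, mul_sum]
  refine sum_congr rfl fun k _ => ?_
  rw [intervalIntegral.integral_const_mul, integral_exp_int_mul_mul_I]
  simp only [sub_eq_zero]
  split_ifs
  · field_simp
  · simp

lemma sum_sq_norm_autocorrelation_le {g : ℂ[X]} {N : ℕ} (hN : g.natDegree < N)
    (s : Finset ℤ) :
    ∑ n ∈ s, ‖g.autocorrelation N n‖ ^ 2 ≤
      (2 * π)⁻¹ * ∫ θ in (0 : ℝ)..2 * π, ‖g.eval (exp (θ * I))‖ ^ 4 := by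
  have hcont : Continuous fun θ : ℝ => ((‖g.eval (exp (θ * I))‖ ^ 2 : ℝ) : ℂ) := by
    fun_prop
  have hL2 : MemLp (fun θ : ℝ => ((‖g.eval (exp (θ * I))‖ ^ 2 : ℝ) : ℂ)) 2
      (volume.restrict (Set.Ioc 0 (2 * π))) :=
    (memLp_two_iff_integrable_sq_norm hcont.aestronglyMeasurable).2
      (hcont.norm.pow 2).integrableOn_Ioc
  have hparseval := hasSum_sq_fourierCoeffOn Real.two_pi_pos hL2
  simp only [fourierCoeffOn_sq_norm_eval_exp_mul_I hN, sub_zero, norm_real, norm_pow, norm_norm,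
    ← pow_mul, smul_eq_mul] at hparseval
  exact sum_le_hasSum s (fun _ _ => by positivity) hparseval

lemma coeff_mul_conj_coeff_eq_one {g : ℂ[X]} {t p : ℕ}
    (hcoeff : ∀ j < t, g.coeff j = 1 ∨ g.coeff j = -1)
    (hper : ∀ j k, j < t → k < t → j % p = k % p → g.coeff j = g.coeff k)
    {j k : ℕ} (hj : j < t) (hk : k < t) (hjk : j % p = k % p) :
    g.coeff j * conj (g.coeff k) = 1 := by
  rw [hper j k hj hk hjk]
  rcases hcoeff k hk with h | h <;> simp [h]

lemma autocorrelation_of_dvd {g : ℂ[X]} {t p : ℕ}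
    (hcoeff : ∀ j < t, g.coeff j = 1 ∨ g.coeff j = -1)
    (hper : ∀ j k, j < t → k < t → j % p = k % p → g.coeff j = g.coeff k)
    {d : ℕ} (hd : p ∣ d) :
    g.autocorrelation t d = (t - d : ℕ) := by
  obtain ⟨m, rfl⟩ := hd
  exact sum_range_sum_range_ite_sub_eq t _ _ fun k hk =>
    coeff_mul_conj_coeff_eq_one hcoeff hper hk (by omega) (Nat.add_mul_mod_self_left k p m)

end Polynomial

theorem long_littlewood_ratio_bound_general (p t : ℕ) (hp : 0 < p)
    (g : Polynomial ℂ)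
    (hcoeff : ∀ j < t, g.coeff j = 1 ∨ g.coeff j = -1)
    (hdeg : ∀ j, t ≤ j → g.coeff j = 0)
    (hper : ∀ j k, j < t → k < t → j % p = k % p → g.coeff j = g.coeff k)
    (hratio : (t : ℝ) / p > 3 / 2) :
    ((1 / (2 * Real.pi)) *
        ∫ θ in (0:ℝ)..(2 * Real.pi), ‖g.eval (Complex.exp (θ * Complex.I))‖ ^ 4)
        / (t : ℝ) ^ 2
      ≥ 1 + 2 * (1 - (p : ℝ) / t) ^ 2 ∧
    1 + 2 * (1 - (p : ℝ) / t) ^ 2 > 11 / 9 := by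
  have h3p : 3 * (p : ℝ) < 2 * t := by
    rw [gt_iff_lt, lt_div_iff₀ (by exact_mod_cast hp)] at hratio; linarith
  have ht : (0 : ℝ) < t := by linarith [(Nat.cast_pos.2 hp : (0 : ℝ) < p)]
  have hpt : p < t := by exact_mod_cast (by linarith : (p : ℝ) < t)
  have hN : g.natDegree < t :=
    (natDegree_le_iff_coeff_eq_zero (n := t - 1).2 fun j hj => hdeg j (by omega)).trans_lt
      (by omega)
  have hsum := sum_sq_norm_autocorrelation_le hN {0, (p : ℤ), -(p : ℤ)}
  rw [sum_insert (by simp; omega), sum_pair (by omega), autocorrelation_neg, norm_conj,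
    ← Nat.cast_zero, autocorrelation_of_dvd hcoeff hper (dvd_zero p),
    autocorrelation_of_dvd hcoeff hper dvd_rfl] at hsum
  simp only [Complex.norm_natCast, Nat.sub_zero] at hsum
  rw [Nat.cast_sub hpt.le] at hsum
  constructor
  · rw [ge_iff_le, one_div, le_div_iff₀ (by positivity),
      show (1 + 2 * (1 - (p : ℝ) / t) ^ 2) * t ^ 2 = t ^ 2 + 2 * (t - p) ^ 2 by field_simp]
    linarith
  · have : (p : ℝ) / t < 2 / 3 := by rw [div_lt_iff₀ ht]; linarith
    nlinarith

theorem long_littlewood_ratio_bound (p t : ℕ) (hp : 0 < p) (ht : 0 < t)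
    (g : Polynomial ℂ)
    (hcoeff : ∀ j < t, g.coeff j = 1 ∨ g.coeff j = -1)
    (hdeg : ∀ j, t ≤ j → g.coeff j = 0)
    (hper : ∀ j k, j < t → k < t → j % p = k % p → g.coeff j = g.coeff k)
    (hratio : (t : ℝ) / p > 3 / 2) :
    ((1 / (2 * Real.pi)) *
        ∫ θ in (0:ℝ)..(2 * Real.pi), ‖g.eval (Complex.exp (θ * Complex.I))‖ ^ 4)
        / (t : ℝ) ^ 2
      ≥ 1 + 2 * (1 - (p : ℝ) / t) ^ 2 ∧
    1 + 2 * (1 - (p : ℝ) / t) ^ 2 > 11 / 9 :=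
  long_littlewood_ratio_bound_general p t hp g hcoeff hdeg hper hratio
end
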